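/- Let G₁, …, G_m be matrix blocks with G_μ of dimension r_{μ-1} × r_μ and length n_μ, and suppose each G_μ is right orthogonal, i.e. ⟨G_μ, G_μᵀ⟩ = I, and r_m = 1. Then the Kronecker product G₁ ⊗ … ⊗ G_m is right orthogonal, i.e. ⟨G₁ ⊗ … ⊗ G_m, (G₁ ⊗ … ⊗ G_m)ᵀ⟩ = ∑_{i₁,…,i_m} (G₁(i₁)⋯G_m(i_m)) (G₁(i₁)⋯G_m(i_m))ᵀ = I (the r₀ × r₀ identity matrix). -/

import Mathlib

open Matrix

/-- The (ordered) Kronecker product `G₁ ⊗ … ⊗ G_s` of the first `s` matrix blocks of a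
family of matrix blocks `G`, where `G μ` has dimension `r μ × r (μ+1)` and length `n μ`.
It is a matrix block of dimension `r 0 × r s`, indexed by tuples `(i₁,…,i_s)`;
the empty product is the (length-one) identity block. -/
def blockProd {r n : ℕ → ℕ}
    (G : ∀ μ : ℕ, Fin (n μ) → Matrix (Fin (r μ)) (Fin (r (μ + 1))) ℝ) :
    (s : ℕ) → ((μ : Fin s) → Fin (n μ.val)) → Matrix (Fin (r 0)) (Fin (r s)) ℝ
  | 0, _ => 1
  | s + 1, i =>
      blockProd G s (fun μ => i ⟨μ.val, Nat.lt_succ_of_lt μ.isLt⟩) *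
        G s (i ⟨s, Nat.lt_succ_self s⟩)

/-! Induct on the number of factors, splitting off the last index: for fixed `(i₁,…,i_s)`,
summing over `i_{s+1}` collapses `A G(i_{s+1}) G(i_{s+1})ᵀ Aᵀ` to `A Aᵀ` by right orthogonality
of `G_{s+1}`, where `A = G₁(i₁)⋯G_s(i_s)`. -/

theorem Matrix.sum_mul_mul_transpose_of_sum_mul_transpose_eq_one
    {ι l m n R : Type*} [Fintype ι] [Fintype m] [Fintype n] [DecidableEq m] [CommSemiring R]
    (A : Matrix l m R) {H : ι → Matrix m n R} (hH : ∑ k, H k * (H k)ᵀ = 1) :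
    ∑ k, A * H k * (A * H k)ᵀ = A * Aᵀ := by
  calc ∑ k, A * H k * (A * H k)ᵀ = A * (∑ k, H k * (H k)ᵀ) * Aᵀ := by
        simp only [transpose_mul, Matrix.mul_sum, Matrix.sum_mul, Matrix.mul_assoc]
    _ = A * Aᵀ := by rw [hH, Matrix.mul_one]

theorem blockProd_snoc {r n : ℕ → ℕ}
    (G : ∀ μ : ℕ, Fin (n μ) → Matrix (Fin (r μ)) (Fin (r (μ + 1))) ℝ) (s : ℕ)
    (i : (μ : Fin s) → Fin (n μ.val)) (k : Fin (n s)) :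
    blockProd G (s + 1) (Fin.snoc (α := fun μ : Fin (s + 1) => Fin (n μ.val)) i k) =
      blockProd G s i * G s k := by
  simp only [blockProd]
  congr
  · funext μ
    exact Fin.snoc_castSucc (α := fun μ : Fin (s + 1) => Fin (n μ.val)) k i μ
  · exact Fin.snoc_last (α := fun μ : Fin (s + 1) => Fin (n μ.val)) k i

theorem kroneckerProd_rightOrthogonal_general
    (m : ℕ) (r n : ℕ → ℕ)
    (G : ∀ μ : ℕ, Fin (n μ) → Matrix (Fin (r μ)) (Fin (r (μ + 1))) ℝ)
    (horth : ∀ μ : ℕ, μ < m → ∑ j : Fin (n μ), G μ j * (G μ j)ᵀ = 1) :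
    ∑ i : ((μ : Fin m) → Fin (n μ.val)),
      blockProd G m i * (blockProd G m i)ᵀ = 1 := by
  induction m with
  | zero => simp [blockProd]
  | succ s ih =>
    rw [← (Fin.snocEquiv fun μ : Fin (s + 1) => Fin (n μ.val)).sum_comp,
      Fintype.sum_prod_type_right]
    simp only [Fin.snocEquiv, Equiv.coe_fn_mk, blockProd_snoc]
    refine (Finset.sum_congr rfl fun i _ => ?_).trans
      (ih fun μ hμ => horth μ (hμ.trans s.lt_succ_self))
    exact sum_mul_mul_transpose_of_sum_mul_transpose_eq_one _ (horth s s.lt_succ_self)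

/-- **Right orthogonality of Kronecker products.**
If each matrix block `G μ` (dimension `r μ × r (μ+1)`, length `n μ`, for `μ < m`) is
right orthogonal, i.e. `⟨G μ, (G μ)ᵀ⟩ = I`, and `r m = 1`, then the Kronecker product
`G₁ ⊗ … ⊗ G_m` is right orthogonal:
`∑_{i₁,…,i_m} (G₁(i₁)⋯G_m(i_m)) (G₁(i₁)⋯G_m(i_m))ᵀ = I` (the `r 0 × r 0` identity). -/
theorem kroneckerProd_rightOrthogonal
    (m : ℕ) (r n : ℕ → ℕ) (hrm : r m = 1)
    (G : ∀ μ : ℕ, Fin (n μ) → Matrix (Fin (r μ)) (Fin (r (μ + 1))) ℝ)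
    (horth : ∀ μ : ℕ, μ < m → ∑ j : Fin (n μ), G μ j * (G μ j)ᵀ = 1) :
    ∑ i : ((μ : Fin m) → Fin (n μ.val)),
      blockProd G m i * (blockProd G m i)ᵀ = 1 :=
  kroneckerProd_rightOrthogonal_general m r n G horth
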